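/- Let B_0, B_1, …, B_n (n ≥ 1) be random vectors forming a path in a Bayes linear tree, i.e. Cov_{B_k}(B_0, B_{k+1}) = 0 for every k with 1 ≤ k ≤ n−1, where each subscripted operator uses the Moore–Penrose inverse of the corresponding variance matrix. Then the belief transform propagates along the path: T_{B_0}(B_n) = [P_{B_{n−1}}(B_n)·…·P_{B_1}(B_2)]·T_{B_0}(B_1)·[P_{B_2}(B_1)·…·P_{B_n}(B_{n−1})]. -/

import Mathlib

open MeasureTheory Matrix

variable {Ω : Type*}

/-- The covariance matrix of two random vectors `B` (dimension `m`) and `D` (dimension `n`):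
the `(i,j)` entry is `E[Bᵢ·Dⱼ] − E[Bᵢ]·E[Dⱼ]`. -/
noncomputable def cov [MeasurableSpace Ω] (μ : Measure Ω) {m n : ℕ}
    (B : Fin m → Ω → ℝ) (D : Fin n → Ω → ℝ) : Matrix (Fin m) (Fin n) ℝ :=
  Matrix.of fun i j =>
    (∫ ω, B i ω * D j ω ∂μ) - (∫ ω, B i ω ∂μ) * (∫ ω, D j ω ∂μ)

/-- `W` is a Moore–Penrose inverse of `V`. -/
def IsMoorePenrose {m n : ℕ} (V : Matrix (Fin m) (Fin n) ℝ)
    (W : Matrix (Fin n) (Fin m) ℝ) : Prop :=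
  V * W * V = V ∧ W * V * W = W ∧ (V * W)ᵀ = V * W ∧ (W * V)ᵀ = W * V

/-- The adjusted expectation `E_D(B)` (computed with the matrix `W`, intended to be the
Moore–Penrose inverse of `Var(D)`): the `i`-th component is
`E[Bᵢ] + Σ_j (Cov(B,D)·W)_{ij}·(Dⱼ − E[Dⱼ])`. -/
noncomputable def adjExp [MeasurableSpace Ω] (μ : Measure Ω) {m n : ℕ}
    (B : Fin m → Ω → ℝ) (D : Fin n → Ω → ℝ)
    (W : Matrix (Fin n) (Fin n) ℝ) : Fin m → Ω → ℝ :=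
  fun i ω => (∫ ω', B i ω' ∂μ) + ∑ j, (cov μ B D * W) i j * (D j ω - ∫ ω', D j ω' ∂μ)

/-- The adjusted covariance `Cov_D(B,C) = Cov(B − E_D(B), C − E_D(C))`. -/
noncomputable def adjCov [MeasurableSpace Ω] (μ : Measure Ω) {m p n : ℕ}
    (B : Fin m → Ω → ℝ) (C : Fin p → Ω → ℝ) (D : Fin n → Ω → ℝ)
    (W : Matrix (Fin n) (Fin n) ℝ) : Matrix (Fin m) (Fin p) ℝ :=
  cov μ (fun i ω => B i ω - adjExp μ B D W i ω) (fun j ω => C j ω - adjExp μ C D W j ω)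

/-- The composite projection `P_{B_{n−1}}(B_n)·…·P_{B_1}(B_2)` along the path
`B_1, …, B_n` (equal to the identity for `n = 1`; junk value `0` for `n = 0`). -/
noncomputable def fwdChain [MeasurableSpace Ω] (μ : Measure Ω) {d : ℕ → ℕ}
    (B : (k : ℕ) → Fin (d k) → Ω → ℝ)
    (W : (k : ℕ) → Matrix (Fin (d k)) (Fin (d k)) ℝ) :
    (n : ℕ) → Matrix (Fin (d n)) (Fin (d 1)) ℝ
  | 0 => 0
  | 1 => 1
  | n + 2 => (cov μ (B (n + 2)) (B (n + 1)) * W (n + 1)) * fwdChain μ B W (n + 1)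

/-- The composite projection `P_{B_2}(B_1)·…·P_{B_n}(B_{n−1})` along the path
`B_1, …, B_n` (equal to the identity for `n = 1`; junk value `0` for `n = 0`). -/
noncomputable def revChain [MeasurableSpace Ω] (μ : Measure Ω) {d : ℕ → ℕ}
    (B : (k : ℕ) → Fin (d k) → Ω → ℝ)
    (W : (k : ℕ) → Matrix (Fin (d k)) (Fin (d k)) ℝ) :
    (n : ℕ) → Matrix (Fin (d 1)) (Fin (d n)) ℝ
  | 0 => 0
  | 1 => 1
  | n + 2 => revChain μ B W (n + 1) * (cov μ (B (n + 1)) (B (n + 2)) * W (n + 2))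

/-!
The Moore–Penrose inverse `W` of the symmetric matrix `Var(D)` is symmetric and satisfies
`W·Var(D)·W = W`, so bilinearity of the covariance gives
`Cov_D(B,C) = Cov(B,C) − Cov(B,D)·W·Cov(D,C)`. The tree condition therefore factorises
`Cov(B_0,B_{k+1}) = Cov(B_0,B_k)·W_k·Cov(B_k,B_{k+1})` and its transpose for `1 ≤ k < n`.
Iterating expresses `Cov(B_n,B_0)` and `Cov(B_0,B_n)·W_n` through `Cov(B_1,B_0)` and
`Cov(B_0,B_1)·W_1` and the two chains of projections, which is the claim.
-/

open ProbabilityTheory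

section Covariance

variable [MeasurableSpace Ω] {μ : Measure Ω} {m n p q : ℕ}

lemma cov_transpose (B : Fin m → Ω → ℝ) (D : Fin n → Ω → ℝ) :
    (cov μ B D)ᵀ = cov μ D B := by
  ext i j
  simp [cov, mul_comm]

variable [IsProbabilityMeasure μ]

lemma cov_apply_eq_covariance {B : Fin m → Ω → ℝ} {D : Fin n → Ω → ℝ} {i : Fin m} {j : Fin n}
    (hB : MemLp (B i) 2 μ) (hD : MemLp (D j) 2 μ) :
    cov μ B D i j = covariance (B i) (D j) μ :=
  (covariance_eq_sub hB hD).symm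

lemma cov_sub_left {F G : Fin m → Ω → ℝ} {H : Fin p → Ω → ℝ}
    (hF : ∀ i, MemLp (F i) 2 μ) (hG : ∀ i, MemLp (G i) 2 μ) (hH : ∀ j, MemLp (H j) 2 μ) :
    cov μ (fun i ω => F i ω - G i ω) H = cov μ F H - cov μ G H := by
  ext i j
  rw [cov_apply_eq_covariance ((hF i).sub (hG i)) (hH j), Matrix.sub_apply,
    cov_apply_eq_covariance (hF i) (hH j), cov_apply_eq_covariance (hG i) (hH j),
    covariance_fun_sub_left (hF i) (hG i) (hH j)]

lemma cov_sub_right {F : Fin m → Ω → ℝ} {G H : Fin p → Ω → ℝ}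
    (hF : ∀ i, MemLp (F i) 2 μ) (hG : ∀ j, MemLp (G j) 2 μ) (hH : ∀ j, MemLp (H j) 2 μ) :
    cov μ F (fun j ω => G j ω - H j ω) = cov μ F G - cov μ F H := by
  rw [← cov_transpose, cov_sub_left hG hH hF, transpose_sub, cov_transpose, cov_transpose]

lemma cov_sub_const_left {F : Fin m → Ω → ℝ} {H : Fin p → Ω → ℝ} (c : Fin m → ℝ)
    (hF : ∀ i, MemLp (F i) 2 μ) (hH : ∀ j, MemLp (H j) 2 μ) :
    cov μ (fun i ω => F i ω - c i) H = cov μ F H := by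
  ext i j
  rw [cov_apply_eq_covariance ((hF i).sub (memLp_const (c i))) (hH j),
    cov_apply_eq_covariance (hF i) (hH j), covariance_sub_const_left ((hF i).integrable one_le_two)]

lemma cov_sub_const_right {F : Fin m → Ω → ℝ} {H : Fin p → Ω → ℝ} (c : Fin p → ℝ)
    (hF : ∀ i, MemLp (F i) 2 μ) (hH : ∀ j, MemLp (H j) 2 μ) :
    cov μ F (fun j ω => H j ω - c j) = cov μ F H := by
  rw [← cov_transpose, cov_sub_const_left c hH hF, cov_transpose]

lemma cov_sum_mul_left (M : Matrix (Fin m) (Fin q) ℝ) {F : Fin q → Ω → ℝ}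
    {H : Fin p → Ω → ℝ} (hF : ∀ k, MemLp (F k) 2 μ) (hH : ∀ j, MemLp (H j) 2 μ) :
    cov μ (fun i ω => ∑ k, M i k * F k ω) H = M * cov μ F H := by
  ext i j
  have hMF : ∀ k, MemLp (fun ω => M i k * F k ω) 2 μ := fun k => (hF k).const_mul _
  rw [cov_apply_eq_covariance (memLp_finsetSum _ fun k _ => hMF k) (hH j),
    covariance_fun_sum_left hMF (hH j), mul_apply]
  refine Finset.sum_congr rfl fun k _ => ?_
  rw [covariance_const_mul_left, cov_apply_eq_covariance (hF k) (hH j)]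

lemma cov_sum_mul_right (N : Matrix (Fin p) (Fin q) ℝ) {F : Fin m → Ω → ℝ}
    {G : Fin q → Ω → ℝ} (hF : ∀ i, MemLp (F i) 2 μ) (hG : ∀ l, MemLp (G l) 2 μ) :
    cov μ F (fun j ω => ∑ l, N j l * G l ω) = cov μ F G * Nᵀ := by
  rw [← cov_transpose, cov_sum_mul_left N hG hF, transpose_mul, cov_transpose]

end Covariance

namespace IsMoorePenrose

variable {m n : ℕ} {V : Matrix (Fin m) (Fin n) ℝ} {W W' : Matrix (Fin n) (Fin m) ℝ}

lemma transpose (h : IsMoorePenrose V W) : IsMoorePenrose Vᵀ Wᵀ := by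
  obtain ⟨hVWV, hWVW, hVW, hWV⟩ := h
  refine ⟨?_, ?_, ?_, ?_⟩
  · rw [← transpose_mul, ← transpose_mul, ← Matrix.mul_assoc, hVWV]
  · rw [← transpose_mul, ← transpose_mul, ← Matrix.mul_assoc, hWVW]
  · rw [← transpose_mul, hWV, hWV]
  · rw [← transpose_mul, hVW, hVW]

lemma unique (h : IsMoorePenrose V W) (h' : IsMoorePenrose V W') : W = W' := by
  obtain ⟨hVWV, hWVW, hVW, hWV⟩ := h
  obtain ⟨hVW'V, hW'VW', hVW', hW'V⟩ := h'
  have hleft : V * W = V * W' :=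
    calc V * W = (V * W' * V * W)ᵀ := by rw [hVW'V, hVW]
      _ = (V * W)ᵀ * (V * W')ᵀ := by rw [Matrix.mul_assoc (V * W'), transpose_mul]
      _ = V * W' := by rw [hVW, hVW', ← Matrix.mul_assoc, hVWV]
  have hright : W * V = W' * V :=
    calc W * V = (W * (V * W' * V))ᵀ := by rw [hVW'V, hWV]
      _ = (W' * V)ᵀ * (W * V)ᵀ := by rw [← transpose_mul]; simp only [Matrix.mul_assoc]
      _ = W' * V := by rw [hW'V, hWV, Matrix.mul_assoc, ← Matrix.mul_assoc V, hVWV]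
  calc W = W * V * W := hWVW.symm
    _ = W' * V * W' := by rw [hright, Matrix.mul_assoc, hleft, ← Matrix.mul_assoc]
    _ = W' := hW'VW'

lemma transpose_eq_self {V W : Matrix (Fin n) (Fin n) ℝ} (hV : Vᵀ = V)
    (h : IsMoorePenrose V W) : Wᵀ = W := by
  have hT := h.transpose
  rw [hV] at hT
  exact hT.unique h

end IsMoorePenrose

section AdjustedCovariance

variable [MeasurableSpace Ω] {μ : Measure Ω} {m n p : ℕ}

lemma sub_adjExp_eq (B : Fin m → Ω → ℝ) (D : Fin n → Ω → ℝ) (W : Matrix (Fin n) (Fin n) ℝ) :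
    (fun i ω => B i ω - adjExp μ B D W i ω) = fun i ω =>
      (B i ω - ∑ k, (cov μ B D * W) i k * D k ω) -
        ((∫ ω', B i ω' ∂μ) - ∑ k, (cov μ B D * W) i k * ∫ ω', D k ω' ∂μ) := by
  funext i ω
  simp only [adjExp, mul_sub, Finset.sum_sub_distrib]
  ring

lemma adjCov_transpose (B : Fin m → Ω → ℝ) (C : Fin p → Ω → ℝ) (D : Fin n → Ω → ℝ)
    (W : Matrix (Fin n) (Fin n) ℝ) : (adjCov μ B C D W)ᵀ = adjCov μ C B D W :=
  cov_transpose _ _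

variable [IsProbabilityMeasure μ]

lemma cov_sub_sum_mul_sub_const {B : Fin m → Ω → ℝ} {C : Fin p → Ω → ℝ}
    {D : Fin n → Ω → ℝ} (M : Matrix (Fin m) (Fin n) ℝ) (N : Matrix (Fin p) (Fin n) ℝ)
    (a : Fin m → ℝ) (c : Fin p → ℝ) (hB : ∀ i, MemLp (B i) 2 μ) (hC : ∀ j, MemLp (C j) 2 μ)
    (hD : ∀ k, MemLp (D k) 2 μ) :
    cov μ (fun i ω => B i ω - ∑ k, M i k * D k ω - a i)
        (fun j ω => C j ω - ∑ l, N j l * D l ω - c j) =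
      cov μ B C - cov μ B D * Nᵀ - (M * cov μ D C - M * cov μ D D * Nᵀ) := by
  have hMD : ∀ {r} (M : Matrix (Fin r) (Fin n) ℝ) i, MemLp (fun ω => ∑ k, M i k * D k ω) 2 μ :=
    fun M i => memLp_finsetSum _ fun k _ => (hD k).const_mul _
  have hBM : ∀ i, MemLp (fun ω => B i ω - ∑ k, M i k * D k ω) 2 μ :=
    fun i => (hB i).sub (hMD M i)
  have hCN : ∀ j, MemLp (fun ω => C j ω - ∑ l, N j l * D l ω) 2 μ :=
    fun j => (hC j).sub (hMD N j)
  have hCNc : ∀ j, MemLp (fun ω => C j ω - ∑ l, N j l * D l ω - c j) 2 μ :=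
    fun j => (hCN j).sub (memLp_const (c j))
  rw [cov_sub_const_left a hBM hCNc,
    cov_sub_const_right c hBM hCN, cov_sub_left hB (hMD M) hCN, cov_sub_right hB hC (hMD N),
    cov_sub_right (hMD M) hC (hMD N), cov_sum_mul_right N hB hD, cov_sum_mul_left M hD hC,
    cov_sum_mul_left M hD (hMD N), cov_sum_mul_right N hD hD, Matrix.mul_assoc]

lemma adjCov_eq {B : Fin m → Ω → ℝ} {C : Fin p → Ω → ℝ} {D : Fin n → Ω → ℝ}
    {W : Matrix (Fin n) (Fin n) ℝ} (hB : ∀ i, MemLp (B i) 2 μ) (hC : ∀ j, MemLp (C j) 2 μ)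
    (hD : ∀ k, MemLp (D k) 2 μ) (hW : IsMoorePenrose (cov μ D D) W) :
    adjCov μ B C D W = cov μ B C - cov μ B D * W * cov μ D C := by
  have hWt : Wᵀ = W := hW.transpose_eq_self (cov_transpose D D)
  rw [adjCov, sub_adjExp_eq, sub_adjExp_eq, cov_sub_sum_mul_sub_const _ _ _ _ hB hC hD,
    transpose_mul, hWt, cov_transpose]
  simp only [Matrix.mul_assoc]
  rw [← Matrix.mul_assoc (cov μ D D) W, ← Matrix.mul_assoc W (cov μ D D * W),
    ← Matrix.mul_assoc W (cov μ D D), hW.2.1]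
  abel

lemma cov_eq_of_adjCov_eq_zero {B : Fin m → Ω → ℝ} {C : Fin p → Ω → ℝ} {D : Fin n → Ω → ℝ}
    {W : Matrix (Fin n) (Fin n) ℝ} (hB : ∀ i, MemLp (B i) 2 μ) (hC : ∀ j, MemLp (C j) 2 μ)
    (hD : ∀ k, MemLp (D k) 2 μ) (hW : IsMoorePenrose (cov μ D D) W)
    (h : adjCov μ B C D W = 0) : cov μ B C = cov μ B D * W * cov μ D C :=
  sub_eq_zero.mp ((adjCov_eq hB hC hD hW).symm.trans h)

end AdjustedCovariance

section Chains

variable [MeasurableSpace Ω] {μ : Measure Ω} {d : ℕ → ℕ} {B : (k : ℕ) → Fin (d k) → Ω → ℝ}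
  {W : (k : ℕ) → Matrix (Fin (d k)) (Fin (d k)) ℝ} {p : ℕ}

lemma fwdChain_succ (hp : 1 ≤ p) :
    fwdChain μ B W (p + 1) = cov μ (B (p + 1)) (B p) * W p * fwdChain μ B W p := by
  obtain ⟨q, rfl⟩ := Nat.exists_eq_add_of_le' hp
  rfl

lemma revChain_succ (hp : 1 ≤ p) :
    revChain μ B W (p + 1) = revChain μ B W p * (cov μ (B p) (B (p + 1)) * W (p + 1)) := by
  obtain ⟨q, rfl⟩ := Nat.exists_eq_add_of_le' hp
  rfl

lemma cov_eq_fwdChain_mul (hp : 1 ≤ p)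
    (hsplit : ∀ k, 1 ≤ k → k < p →
      cov μ (B (k + 1)) (B 0) = cov μ (B (k + 1)) (B k) * W k * cov μ (B k) (B 0)) :
    cov μ (B p) (B 0) = fwdChain μ B W p * cov μ (B 1) (B 0) := by
  induction p, hp using Nat.le_induction with
  | base => rw [fwdChain, Matrix.one_mul]
  | succ p hp ih =>
    rw [hsplit p hp p.lt_succ_self, ih fun k hk hkp => hsplit k hk (hkp.trans p.lt_succ_self),
      fwdChain_succ hp]
    simp only [Matrix.mul_assoc]

lemma cov_mul_eq_mul_revChain (hp : 1 ≤ p)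
    (hsplit : ∀ k, 1 ≤ k → k < p →
      cov μ (B 0) (B (k + 1)) = cov μ (B 0) (B k) * W k * cov μ (B k) (B (k + 1))) :
    cov μ (B 0) (B p) * W p = cov μ (B 0) (B 1) * W 1 * revChain μ B W p := by
  induction p, hp using Nat.le_induction with
  | base => rw [revChain, Matrix.mul_one]
  | succ p hp ih =>
    rw [revChain_succ hp, ← Matrix.mul_assoc,
      ← ih fun k hk hkp => hsplit k hk (hkp.trans p.lt_succ_self), hsplit p hp p.lt_succ_self]
    simp only [Matrix.mul_assoc]

end Chains

/-- if `B_0, …, B_n` (`n ≥ 1`) form a path in a Bayes linear tree, i.e.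
`Cov_{B_k}(B_0, B_{k+1}) = 0` for `1 ≤ k ≤ n−1`, then the belief transform propagates:
`T_{B_0}(B_n) = [P_{B_{n−1}}(B_n)·…·P_{B_1}(B_2)]·T_{B_0}(B_1)·[P_{B_2}(B_1)·…·P_{B_n}(B_{n−1})]`,
where `T_{B_0}(B_k) = P_{B_0}(B_k)·P_{B_k}(B_0) = Cov(B_k,B_0)·W_0·Cov(B_0,B_k)·W_k`. -/
theorem transf_propagates_along_path [MeasurableSpace Ω] (μ : Measure Ω)
    [IsProbabilityMeasure μ] {d : ℕ → ℕ} (B : (k : ℕ) → Fin (d k) → Ω → ℝ)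
    (hB : ∀ k i, Measurable (B k i) ∧ MemLp (B k i) 2 μ)
    (W : (k : ℕ) → Matrix (Fin (d k)) (Fin (d k)) ℝ)
    (hW : ∀ k, IsMoorePenrose (cov μ (B k) (B k)) (W k))
    (n : ℕ) (hn : 1 ≤ n)
    (hpath : ∀ k, 1 ≤ k → k ≤ n - 1 → adjCov μ (B 0) (B (k + 1)) (B k) (W k) = 0) :
    cov μ (B n) (B 0) * W 0 * (cov μ (B 0) (B n) * W n) =
      fwdChain μ B W n * (cov μ (B 1) (B 0) * W 0 * (cov μ (B 0) (B 1) * W 1)) *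
        revChain μ B W n := by
  have hm : ∀ k i, MemLp (B k i) 2 μ := fun k i => (hB k i).2
  have hpath' : ∀ k, 1 ≤ k → k < n → adjCov μ (B 0) (B (k + 1)) (B k) (W k) = 0 :=
    fun k hk hkn => hpath k hk (by omega)
  rw [cov_eq_fwdChain_mul hn fun k hk hkn => cov_eq_of_adjCov_eq_zero (hm _) (hm 0) (hm k) (hW k)
      (by rw [← adjCov_transpose, hpath' k hk hkn, transpose_zero]),
    cov_mul_eq_mul_revChain hn fun k hk hkn =>
      cov_eq_of_adjCov_eq_zero (hm 0) (hm _) (hm k) (hW k) (hpath' k hk hkn)]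
  simp only [Matrix.mul_assoc]
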